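/- arXiv:2512.12572 — 3 statements merged into one kernel-verified Lean document; each statement's English description precedes it below -/
import Mathlib

section
/- Let L : ℝ^d → ℝ be convex and twice continuously differentiable with gradient g and Hessian H, let Σ be positive definite, and fix a point p ∈ ℝ^d and radius r > 0. Let B = {p + e : ‖e‖_Σ ≤ r}. Suppose: (i) ‖g_p‖_{Σ^{-1}} ≤ C_h; (ii) for all θ ∈ B, Σ^{-1/2} H_θ Σ^{-1/2} ⪰ C_op^{-1} I; (iii) C_h C_op < r. Then any point θ* with g_{θ*} = 0 satisfies θ* ∈ B. -/
open scoped RealInnerProductSpace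

set_option maxHeartbeats 1000000 in
/-- Lemma "θ̂_T ∈ B": if `L` is convex `C²` with gradient `g` and Hessian `H`,
`‖g_p‖_{Σ⁻¹} ≤ C_h`, the Hessian satisfies `Σ^{-1/2} H_θ Σ^{-1/2} ⪰ C_op⁻¹ I` on the
`Σ`-ball `B` of radius `r` around `p`, and `C_h C_op < r`, then every zero `θ*` of the
gradient lies in `B`. -/
theorem minimizer_in_ball {d : ℕ}
    (L : EuclideanSpace ℝ (Fin d) → ℝ)
    (g : EuclideanSpace ℝ (Fin d) → EuclideanSpace ℝ (Fin d))
    (H : EuclideanSpace ℝ (Fin d) → (EuclideanSpace ℝ (Fin d) →L[ℝ] EuclideanSpace ℝ (Fin d)))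
    (hconv : ConvexOn ℝ Set.univ L) (hC2 : ContDiff ℝ 2 L)
    (hg : ∀ θ, HasGradientAt L (g θ) θ)
    (hH : ∀ θ, HasFDerivAt g (H θ) θ)
    (Sig SigInv : EuclideanSpace ℝ (Fin d) →L[ℝ] EuclideanSpace ℝ (Fin d))
    (hSigsymm : ∀ u v, ⟪Sig u, v⟫ = ⟪u, Sig v⟫)
    (hSigpos : ∀ v, v ≠ 0 → 0 < ⟪v, Sig v⟫)
    (hSigInv₁ : Sig.comp SigInv = ContinuousLinearMap.id ℝ _)
    (hSigInv₂ : SigInv.comp Sig = ContinuousLinearMap.id ℝ _)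
    (p : EuclideanSpace ℝ (Fin d)) (r Ch Cop : ℝ) (hr : 0 < r) (hCop : 0 < Cop)
    (hgp : Real.sqrt ⟪g p, SigInv (g p)⟫ ≤ Ch)
    (hB : ∀ θ : EuclideanSpace ℝ (Fin d), Real.sqrt ⟪θ - p, Sig (θ - p)⟫ ≤ r →
      ∀ v, Cop⁻¹ * ⟪v, Sig v⟫ ≤ ⟪v, H θ v⟫)
    (hcond : Ch * Cop < r)
    (θstar : EuclideanSpace ℝ (Fin d)) (hθstar : g θstar = 0) :
    Real.sqrt ⟪θstar - p, Sig (θstar - p)⟫ ≤ r := by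
  by_contra hcon
  push_neg at hcon
  set e : EuclideanSpace ℝ (Fin d) := θstar - p with he
  set N : ℝ := Real.sqrt ⟪e, Sig e⟫ with hN
  have hN0 : 0 < N := hr.trans hcon
  have hSignn : ∀ v : EuclideanSpace ℝ (Fin d), 0 ≤ ⟪v, Sig v⟫ := by
    intro v
    rcases eq_or_ne v 0 with rfl | hv
    · simp
    · exact (hSigpos v hv).le
  have hNsq : ⟪e, Sig e⟫ = N ^ 2 := (Real.sq_sqrt (hSignn e)).symm
  have hCh0 : 0 ≤ Ch := le_trans (Real.sqrt_nonneg _) hgp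
  set line : ℝ → EuclideanSpace ℝ (Fin d) := fun t => p + t • e with hlinedef
  have hline : ∀ t : ℝ, HasDerivAt line e t := fun t => by
    simpa [hlinedef] using ((hasDerivAt_id t).smul_const e).const_add p
  have hline1 : line 1 = θstar := by simp [hlinedef, he]
  have hline0 : line 0 = p := by simp [hlinedef]
  set φ : ℝ → ℝ := fun t => ⟪g (line t), e⟫ with hφdef
  have hφ' : ∀ t : ℝ, HasDerivAt φ ⟪H (line t) e, e⟫ t := by
    intro t
    have h1 : HasDerivAt (fun t => g (line t)) (H (line t) e) t :=
      (hH (line t)).comp_hasDerivAt t (hline t)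
    have h2 := h1.inner ℝ (hasDerivAt_const t e)
    simpa [hφdef] using h2
  have hψ' : ∀ t : ℝ, HasDerivAt (fun t => L (line t)) (φ t) t := by
    intro t
    have h1 := (hg (line t)).hasFDerivAt.comp_hasDerivAt t (hline t)
    simp only [InnerProductSpace.toDual_apply_apply] at h1
    exact h1
  have hψconv : ConvexOn ℝ Set.univ (fun t : ℝ => L (line t)) := by
    have h := hconv.comp_affineMap (AffineMap.lineMap p θstar)
    have heq : (fun t : ℝ => L (line t)) = L ∘ (AffineMap.lineMap p θstar) := by
      funext t
      simp [hlinedef, AffineMap.lineMap_apply, he, add_comm]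
    rw [heq]
    simpa using h
  have hφmono : MonotoneOn φ Set.univ := by
    have h := hψconv.monotoneOn_deriv (fun x _ => (hψ' x).differentiableAt)
    intro a ha b hb hab
    have h2 := h ha hb hab
    rwa [(hψ' a).deriv, (hψ' b).deriv] at h2
  have hφ1 : φ 1 = 0 := by simp [hφdef, hline1, hθstar]
  set s : ℝ := r / N with hs
  have hs0 : 0 < s := div_pos hr hN0
  have hs1 : s < 1 := (div_lt_one hN0).2 hcon
  have hφs : φ s ≤ 0 := hφ1 ▸ hφmono (Set.mem_univ s) (Set.mem_univ 1) hs1.le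
  have hlow : Cop⁻¹ * N ^ 2 * (s - 0) ≤ φ s - φ 0 := by
    apply Convex.mul_sub_le_image_sub_of_le_deriv (convex_Icc 0 s)
      (fun x _ => (hφ' x).continuousAt.continuousWithinAt)
      (fun x _ => (hφ' x).differentiableAt.differentiableWithinAt)
    · intro x hx
      rw [interior_Icc] at hx
      rw [(hφ' x).deriv]
      have hxr : x * N ≤ r := by
        have hxs : x < r / N := hs ▸ hx.2
        linarith [(lt_div_iff₀ hN0).1 hxs]
      have hxN : Real.sqrt ⟪line x - p, Sig (line x - p)⟫ ≤ r := by
        have h1 : line x - p = x • e := by simp [hlinedef]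
        rw [h1]
        have h2 : ⟪x • e, Sig (x • e)⟫ = (x * N) ^ 2 := by
          rw [map_smul, real_inner_smul_left, real_inner_smul_right, hNsq]; ring
        rw [h2, Real.sqrt_sq (mul_nonneg hx.1.le hN0.le)]
        exact hxr
      have h3 := hB (line x) hxN e
      rw [real_inner_comm]
      calc Cop⁻¹ * N ^ 2 = Cop⁻¹ * ⟪e, Sig e⟫ := by rw [hNsq]
        _ ≤ ⟪e, H (line x) e⟫ := h3
    · exact Set.left_mem_Icc.2 hs0.le
    · exact Set.right_mem_Icc.2 hs0.le
    · exact hs0.le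
  have hCS : -(Ch * N) ≤ φ 0 := by
    have hφ0 : φ 0 = ⟪g p, e⟫ := by simp [hφdef, hline0]
    set a := g p with ha
    set u : EuclideanSpace ℝ (Fin d) := SigInv a with hu
    have hSu : Sig u = a := by
      have := congrArg (fun T : EuclideanSpace ℝ (Fin d) →L[ℝ] _ => T a) hSigInv₁
      simpa using this
    have hA : ⟪u, Sig u⟫ = ⟪a, SigInv a⟫ := by rw [hSu, real_inner_comm, hu]
    have hAle : ⟪u, Sig u⟫ ≤ Ch ^ 2 := by
      rw [hA]
      have h1 : ⟪a, SigInv a⟫ = Real.sqrt ⟪a, SigInv a⟫ ^ 2 := by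
        rw [Real.sq_sqrt (hA ▸ hSignn u)]
      rw [h1]
      exact pow_le_pow_left₀ (Real.sqrt_nonneg _) hgp 2
    have hBval : ⟪u, Sig e⟫ = ⟪a, e⟫ := by rw [← hSigsymm, hSu]
    have hBval2 : ⟪e, Sig u⟫ = ⟪a, e⟫ := by
      rw [real_inner_comm, hSigsymm, hBval]
    have hexpand : ∀ c : ℝ, 0 ≤ ⟪u, Sig u⟫ + 2 * c * ⟪a, e⟫ + c ^ 2 * N ^ 2 := by
      intro c
      have h := hSignn (u + c • e)
      have h2 : ⟪u + c • e, Sig (u + c • e)⟫ =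
          ⟪u, Sig u⟫ + 2 * c * ⟪a, e⟫ + c ^ 2 * N ^ 2 := by
        rw [map_add, map_smul, inner_add_left, inner_add_right, inner_add_right,
          real_inner_smul_left, real_inner_smul_left, real_inner_smul_right,
          real_inner_smul_right, hBval, hBval2, hNsq]
        ring
      rw [h2] at h; exact h
    have hsq : ⟪a, e⟫ ^ 2 ≤ Ch ^ 2 * N ^ 2 := by
      have h := hexpand (-(⟪a, e⟫ / N ^ 2))
      have hN2 : (0:ℝ) < N ^ 2 := by positivity
      have h3 : ⟪u, Sig u⟫ + 2 * -(⟪a, e⟫ / N ^ 2) * ⟪a, e⟫ +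
          (-(⟪a, e⟫ / N ^ 2)) ^ 2 * N ^ 2 = ⟪u, Sig u⟫ - ⟪a, e⟫ ^ 2 / N ^ 2 := by
        field_simp
        ring
      rw [h3] at h
      have h4 : ⟪a, e⟫ ^ 2 / N ^ 2 ≤ ⟪u, Sig u⟫ := by linarith
      have h5 : ⟪a, e⟫ ^ 2 ≤ ⟪u, Sig u⟫ * N ^ 2 := (div_le_iff₀ hN2).1 h4
      nlinarith [mul_le_mul_of_nonneg_right hAle hN2.le]
    rw [hφ0]
    nlinarith [hsq, sq_nonneg (⟪a, e⟫ + Ch * N), mul_nonneg hCh0 hN0.le]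
  rw [show Cop⁻¹ * N ^ 2 * (s - 0) = Cop⁻¹ * r * N by
    rw [hs]; field_simp; ring] at hlow
  have hfin : Cop⁻¹ * r * N ≤ Ch * N := by linarith
  have h1 : Cop⁻¹ * r ≤ Ch := le_of_mul_le_mul_right (by linarith [hfin]) hN0
  have h2 : r ≤ Ch * Cop := by
    have := mul_le_mul_of_nonneg_right h1 hCop.le
    rwa [mul_comm Cop⁻¹ r, mul_assoc, inv_mul_cancel₀ (ne_of_gt hCop), mul_one] at this
  linarith
end

section
/- Let L : ℝ^d → ℝ be convex and twice continuously differentiable with gradient g and Hessian H, Σ positive definite, p ∈ ℝ^d, r > 0, and B = {p + e : ‖e‖_Σ ≤ r}. Suppose ‖g_p‖_{Σ^{-1}} ≤ C_h, for all θ ∈ B one has Σ^{-1/2} H_θ Σ^{-1/2} ⪰ C_op^{-1} I, and C_h C_op < r. Then any minimizer θ* with g_{θ*} = 0 satisfies ‖θ* − p‖_Σ ≤ C_h C_op. -/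
open scoped RealInnerProductSpace

private lemma cs_aux {n : ℕ} (Sig : EuclideanSpace ℝ (Fin n) →L[ℝ] EuclideanSpace ℝ (Fin n))
    (hSigsymm : ∀ u v, ⟪Sig u, v⟫ = ⟪u, Sig v⟫)
    (hSigpos : ∀ v, v ≠ 0 → 0 < ⟪v, Sig v⟫)
    (u w : EuclideanSpace ℝ (Fin n)) :
    ⟪u, Sig w⟫ ^ 2 ≤ ⟪u, Sig u⟫ * ⟪w, Sig w⟫ := by
  have hnn : ∀ v, 0 ≤ ⟪v, Sig v⟫ := by
    intro v
    rcases eq_or_ne v 0 with h | h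
    · simp [h]
    · exact (hSigpos v h).le
  have key : ∀ x : ℝ, 0 ≤ ⟪w, Sig w⟫ * (x * x) + (2 * ⟪u, Sig w⟫) * x + ⟪u, Sig u⟫ := by
    intro x
    have h := hnn (u + x • w)
    have hexp : ⟪u + x • w, Sig (u + x • w)⟫
        = ⟪w, Sig w⟫ * (x * x) + (2 * ⟪u, Sig w⟫) * x + ⟪u, Sig u⟫ := by
      have hsw : ⟪w, Sig u⟫ = ⟪u, Sig w⟫ := by
        rw [← hSigsymm u w, real_inner_comm]
      simp only [map_add, map_smul, inner_add_left, inner_add_right,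
        inner_smul_left, inner_smul_right, RCLike.star_def, conj_trivial]
      rw [hsw]; ring
    rw [hexp] at h; exact h
  have hd := discrim_le_zero key
  rw [discrim] at hd
  nlinarith [hd]

/-- Main theorem: if `L` is convex `C²` with gradient `g` and Hessian `H`,
`‖g_p‖_{Σ⁻¹} ≤ C_h`, the Hessian satisfies `Σ^{-1/2} H_θ Σ^{-1/2} ⪰ C_op⁻¹ I` on the
`Σ`-ball `B` of radius `r` around `p`, and `C_h C_op < r`, then every zero `θ*` of the
gradient lies in `B`. -/
theorem newton_step_accuracy_main {d : ℕ}
    (L : EuclideanSpace ℝ (Fin d) → ℝ)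
    (g : EuclideanSpace ℝ (Fin d) → EuclideanSpace ℝ (Fin d))
    (H : EuclideanSpace ℝ (Fin d) → (EuclideanSpace ℝ (Fin d) →L[ℝ] EuclideanSpace ℝ (Fin d)))
    (hconv : ConvexOn ℝ Set.univ L) (hC2 : ContDiff ℝ 2 L)
    (hg : ∀ θ, HasGradientAt L (g θ) θ)
    (hH : ∀ θ, HasFDerivAt g (H θ) θ)
    (Sig SigInv : EuclideanSpace ℝ (Fin d) →L[ℝ] EuclideanSpace ℝ (Fin d))
    (hSigsymm : ∀ u v, ⟪Sig u, v⟫ = ⟪u, Sig v⟫)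
    (hSigpos : ∀ v, v ≠ 0 → 0 < ⟪v, Sig v⟫)
    (hSigInv₁ : Sig.comp SigInv = ContinuousLinearMap.id ℝ _)
    (hSigInv₂ : SigInv.comp Sig = ContinuousLinearMap.id ℝ _)
    (p : EuclideanSpace ℝ (Fin d)) (r Ch Cop : ℝ) (hr : 0 < r) (hCop : 0 < Cop)
    (hgp : Real.sqrt ⟪g p, SigInv (g p)⟫ ≤ Ch)
    (hB : ∀ θ : EuclideanSpace ℝ (Fin d), Real.sqrt ⟪θ - p, Sig (θ - p)⟫ ≤ r →
      ∀ v, Cop⁻¹ * ⟪v, Sig v⟫ ≤ ⟪v, H θ v⟫)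
    (hcond : Ch * Cop < r)
    (θstar : EuclideanSpace ℝ (Fin d)) (hθstar : g θstar = 0) :
    Real.sqrt ⟪θstar - p, Sig (θstar - p)⟫ ≤ Ch * Cop := by
  have hCh : 0 ≤ Ch := le_trans (Real.sqrt_nonneg _) hgp
  set d0 : EuclideanSpace ℝ (Fin d) := θstar - p with hd0def
  rcases eq_or_ne d0 0 with hd0 | hd0
  · rw [hd0]
    simp only [map_zero, inner_zero_left, Real.sqrt_zero]
    exact mul_nonneg hCh hCop.le
  -- basic quantities
  have hQdpos : 0 < ⟪d0, Sig d0⟫ := hSigpos d0 hd0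
  set Qd : ℝ := ⟪d0, Sig d0⟫ with hQddef
  set D : ℝ := Real.sqrt Qd with hDdef
  have hDpos : 0 < D := Real.sqrt_pos.mpr hQdpos
  have hD2 : D ^ 2 = Qd := Real.sq_sqrt hQdpos.le
  set T : ℝ := min 1 (r / D) with hTdef
  have hT0 : 0 < T := lt_min one_pos (div_pos hr hDpos)
  have hT1 : T ≤ 1 := min_le_left _ _
  -- path and derivatives
  have hpath : ∀ t : ℝ, HasDerivAt (fun s : ℝ => p + s • d0) d0 t := fun t => by
    simpa using ((hasDerivAt_id t).smul_const d0).const_add p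
  set φ : ℝ → ℝ := fun t => ⟪d0, g (p + t • d0)⟫ with hφdef
  have hφval : ∀ t : ℝ, φ t = ⟪d0, g (p + t • d0)⟫ := fun t => rfl
  have hφderiv : ∀ t : ℝ, HasDerivAt φ ⟪d0, H (p + t • d0) d0⟫ t := by
    intro t
    have h1 : HasDerivAt (fun s : ℝ => g (p + s • d0)) (H (p + t • d0) d0) t :=
      (hH _).comp_hasDerivAt t (hpath t)
    exact (innerSL ℝ d0).hasFDerivAt.comp_hasDerivAt t h1
  have hψderiv : ∀ t : ℝ, HasDerivAt (fun s : ℝ => L (p + s • d0)) (φ t) t := by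
    intro t
    have h2 := (hg (p + t • d0)).hasFDerivAt.comp_hasDerivAt t (hpath t)
    have h3 : HasDerivAt (fun s : ℝ => L (p + s • d0)) ⟪g (p + t • d0), d0⟫ t := by
      simpa [Function.comp_def, InnerProductSpace.toDual_apply_apply] using h2
    rw [hφval t, real_inner_comm]
    exact h3
  -- φ 1 = 0
  have hp1 : p + (1 : ℝ) • d0 = θstar := by rw [one_smul, hd0def]; abel
  have hφ1 : φ 1 = 0 := by rw [hφval 1, hp1, hθstar, inner_zero_right]
  -- ψ convex
  have hψconv : ConvexOn ℝ Set.univ (fun s : ℝ => L (p + s • d0)) := by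
    have h := hconv.comp_affineMap (AffineMap.lineMap p (p + d0))
    have he : (Set.univ : Set ℝ) = (AffineMap.lineMap p (p + d0)) ⁻¹' Set.univ := by simp
    rw [he]
    convert h using 2 with s
    any_goals rfl
    simp [AffineMap.lineMap_apply, add_comm]
  -- φ T ≤ 0
  have hφT : φ T ≤ 0 := by
    rcases eq_or_lt_of_le hT1 with h | h
    · rw [h, hφ1]
    · have h1 : φ T ≤ slope (fun s : ℝ => L (p + s • d0)) T 1 :=
        hψconv.le_slope_of_hasDerivAt (Set.mem_univ T) (Set.mem_univ 1) h (hψderiv T)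
      have h2 : slope (fun s : ℝ => L (p + s • d0)) T 1 ≤ φ 1 :=
        hψconv.slope_le_of_hasDerivAt (Set.mem_univ T) (Set.mem_univ 1) h (hψderiv 1)
      linarith [hφ1 ▸ h2, h1]
  -- curvature bound on [0, T]
  have hTD : T * D ≤ r := by
    have h1 : T ≤ r / D := min_le_right _ _
    calc T * D ≤ (r / D) * D := mul_le_mul_of_nonneg_right h1 hDpos.le
    _ = r := by field_simp
  have hderiv_ge : ∀ t ∈ Set.Ioo (0:ℝ) T, Cop⁻¹ * Qd ≤ deriv φ t := by
    intro t ht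
    have hmem : Real.sqrt ⟪(p + t • d0) - p, Sig ((p + t • d0) - p)⟫ ≤ r := by
      have he : (p + t • d0) - p = t • d0 := by abel
      rw [he]
      have h2 : ⟪t • d0, Sig (t • d0)⟫ = t ^ 2 * Qd := by
        rw [map_smul, real_inner_smul_left, real_inner_smul_right, hQddef]; ring
      rw [h2, Real.sqrt_mul (sq_nonneg t), Real.sqrt_sq ht.1.le, ← hDdef]
      calc t * D ≤ T * D := mul_le_mul_of_nonneg_right ht.2.le hDpos.le
      _ ≤ r := hTD
    have := hB (p + t • d0) hmem d0
    rw [(hφderiv t).deriv]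
    exact this
  have hmvt : Cop⁻¹ * Qd * (T - 0) ≤ φ T - φ 0 := by
    have hdiff : ∀ t : ℝ, DifferentiableAt ℝ φ t := fun t => (hφderiv t).differentiableAt
    refine (convex_Icc 0 T).mul_sub_le_image_sub_of_le_deriv
      (fun t _ => (hdiff t).continuousAt.continuousWithinAt)
      (fun t _ => (hdiff t).differentiableWithinAt) ?_ 0 ?_ T ?_ hT0.le
    · intro t ht
      rw [interior_Icc] at ht
      exact hderiv_ge t ht
    · exact Set.mem_Icc.mpr ⟨le_rfl, hT0.le⟩
    · exact Set.mem_Icc.mpr ⟨hT0.le, le_rfl⟩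
  -- bound on φ 0 via Cauchy-Schwarz
  have hφ0 : -(D * Ch) ≤ φ 0 := by
    have hp0 : p + (0 : ℝ) • d0 = p := by simp
    have hφ0v : φ 0 = ⟪d0, g p⟫ := by rw [hφval 0, hp0]
    have hw : Sig (SigInv (g p)) = g p := by
      have := congrArg (fun f => f (g p)) hSigInv₁
      simpa using this
    have hcs := cs_aux Sig hSigsymm hSigpos d0 (SigInv (g p))
    have hcomm : (inner ℝ (SigInv (g p)) (g p) : ℝ) = inner ℝ (g p) (SigInv (g p)) :=
      real_inner_comm _ _
    rw [hw, hcomm] at hcs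
    -- hcs : ⟪d0, g p⟫ ^ 2 ≤ Qd * ⟪g p, SigInv (g p)⟫
    have hgQnn : 0 ≤ ⟪g p, SigInv (g p)⟫ := by
      rcases eq_or_ne (SigInv (g p)) 0 with h0 | h0
      · have hgz : g p = 0 := by rw [← hw, h0, map_zero]
        simp [hgz]
      · have h1 := hSigpos _ h0
        rw [hw] at h1
        have h2 : (inner ℝ (SigInv (g p)) (g p) : ℝ) = inner ℝ (g p) (SigInv (g p)) :=
          real_inner_comm _ _
        rw [h2] at h1
        exact h1.le
    have hsq : Real.sqrt ⟪g p, SigInv (g p)⟫ ^ 2 = ⟪g p, SigInv (g p)⟫ := Real.sq_sqrt hgQnn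
    have hle : ⟪g p, SigInv (g p)⟫ ≤ Ch ^ 2 := by
      nlinarith [hsq, hgp, Real.sqrt_nonneg ⟪g p, SigInv (g p)⟫]
    have h1 : φ 0 ^ 2 ≤ (D * Ch) ^ 2 := by
      rw [hφ0v]
      calc ⟪d0, g p⟫ ^ 2 ≤ Qd * ⟪g p, SigInv (g p)⟫ := hcs
      _ ≤ Qd * Ch ^ 2 := mul_le_mul_of_nonneg_left hle hQdpos.le
      _ = (D * Ch) ^ 2 := by rw [← hD2]; ring
    exact (abs_le_of_sq_le_sq' h1 (mul_nonneg hDpos.le hCh)).1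
  -- combine
  have h1 : Cop⁻¹ * D ^ 2 * T ≤ D * Ch := by
    rw [hD2]
    have := hmvt
    simp only [sub_zero] at this
    linarith [hφT, hφ0]
  have hmain : D * T ≤ Ch * Cop := by
    have h3 : D * (D * T) ≤ D * (Ch * Cop) := by
      calc D * (D * T) = Cop * (Cop⁻¹ * D ^ 2 * T) := by
            field_simp
      _ ≤ Cop * (D * Ch) := mul_le_mul_of_nonneg_left h1 hCop.le
      _ = D * (Ch * Cop) := by ring
    exact le_of_mul_le_mul_left h3 hDpos
  rcases le_or_gt D r with hDr | hDr
  · have hT : T = 1 := by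
      rw [hTdef, min_eq_left]
      rw [le_div_iff₀ hDpos]
      linarith
    rw [hT, mul_one] at hmain
    exact hmain
  · exfalso
    have hT : T = r / D := by
      rw [hTdef, min_eq_right]
      rw [div_le_one hDpos]
      linarith
    have heq : D * (r / D) = r := by field_simp
    rw [hT, heq] at hmain
    linarith
end

section
/- Let H ∈ ℝ^{d×d} be symmetric positive definite, X ∈ ℝ^{d×k}, β ∈ ℝ^k with βᵢ ≥ 0, W = X diag(√β), and v ∈ ℝ^d. Then ‖X diag(β) Xᵀ (H + WWᵀ)^{-1} v‖₂ ≤ ‖W‖_op · ‖Wᵀ H^{-1} v‖₂. -/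
open Matrix

/-- Euclidean norm of a vector in `ℝ^m`. -/
noncomputable def vecNorm {m : ℕ} (v : Fin m → ℝ) : ℝ := Real.sqrt (∑ i, v i ^ 2)

/-- ℓ₂→ℓ₂ operator norm of a matrix. -/
noncomputable def opNorm {m k : ℕ} (M : Matrix (Fin m) (Fin k) ℝ) : ℝ :=
  ‖LinearMap.toContinuousLinearMap (Matrix.toEuclideanLin M)‖

lemma vecNorm_nonneg {m : ℕ} (v : Fin m → ℝ) : 0 ≤ vecNorm v := Real.sqrt_nonneg _

lemma vecNorm_eq_norm {m : ℕ} (v : Fin m → ℝ) :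
    vecNorm v = ‖(WithLp.equiv 2 (Fin m → ℝ)).symm v‖ := by
  rw [EuclideanSpace.norm_eq]
  simp [vecNorm, Real.norm_eq_abs, sq_abs]

lemma vecNorm_mulVec_le {m k : ℕ} (M : Matrix (Fin m) (Fin k) ℝ) (x : Fin k → ℝ) :
    vecNorm (M *ᵥ x) ≤ opNorm M * vecNorm x := by
  rw [vecNorm_eq_norm, vecNorm_eq_norm]
  exact
    (LinearMap.toContinuousLinearMap (Matrix.toEuclideanLin M)).le_opNorm
      ((WithLp.equiv 2 (Fin k → ℝ)).symm x)

lemma dotProduct_le_vecNorm {m : ℕ} (y u : Fin m → ℝ) :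
    y ⬝ᵥ u ≤ vecNorm y * vecNorm u := by
  have h := real_inner_le_norm ((WithLp.equiv 2 (Fin m → ℝ)).symm y)
      ((WithLp.equiv 2 (Fin m → ℝ)).symm u)
  rw [vecNorm_eq_norm, vecNorm_eq_norm]
  refine le_trans (le_of_eq ?_) h
  simp [PiLp.inner_apply, dotProduct, mul_comm]

lemma sq_vecNorm {m : ℕ} (y : Fin m → ℝ) : y ⬝ᵥ y = vecNorm y ^ 2 := by
  rw [vecNorm, Real.sq_sqrt (by positivity)]
  simp [dotProduct, sq]

lemma vecNorm_one_add_inv_le {k : ℕ} (Δ : Matrix (Fin k) (Fin k) ℝ)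
    (hΔ : Δ.PosSemidef) (u : Fin k → ℝ) :
    vecNorm ((1 + Δ)⁻¹ *ᵥ u) ≤ vecNorm u := by
  have hA : (1 + Δ).PosDef := Matrix.PosDef.add_posSemidef Matrix.PosDef.one hΔ
  have hdet : IsUnit (1 + Δ).det := hA.det_pos.ne'.isUnit
  set y := (1 + Δ)⁻¹ *ᵥ u with hy
  have hAy : (1 + Δ) *ᵥ y = u := by
    rw [hy, Matrix.mulVec_mulVec, Matrix.mul_nonsing_inv _ hdet, Matrix.one_mulVec]
  have hpsd : 0 ≤ y ⬝ᵥ (Δ *ᵥ y) := by simpa using hΔ.dotProduct_mulVec_nonneg y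
  have hyu : vecNorm y ^ 2 ≤ y ⬝ᵥ u := by
    rw [← hAy, Matrix.add_mulVec, Matrix.one_mulVec, dotProduct_add, sq_vecNorm]
    linarith
  have hcs : y ⬝ᵥ u ≤ vecNorm y * vecNorm u := dotProduct_le_vecNorm y u
  rcases eq_or_lt_of_le (vecNorm_nonneg y) with h0 | h0
  · rw [← h0]; exact vecNorm_nonneg u
  · refine le_of_mul_le_mul_left ?_ h0
    nlinarith

/-- For symmetric positive-definite `H`, `X ∈ ℝ^{d×k}`, `β ≥ 0`, `W = X diag(√β)` and any
`v ∈ ℝ^d`: `‖X diag(β) Xᵀ (H + WWᵀ)⁻¹ v‖₂ ≤ ‖W‖_op · ‖Wᵀ H⁻¹ v‖₂`. -/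
theorem drif_key_term_bound {d k : ℕ}
    (H : Matrix (Fin d) (Fin d) ℝ) (hH : H.PosDef)
    (X : Matrix (Fin d) (Fin k) ℝ) (β : Fin k → ℝ) (hβ : ∀ i, 0 ≤ β i)
    (W : Matrix (Fin d) (Fin k) ℝ)
    (hW : W = X * Matrix.diagonal fun i => Real.sqrt (β i))
    (v : Fin d → ℝ) :
    vecNorm ((X * Matrix.diagonal β * Xᵀ * (H + W * Wᵀ)⁻¹) *ᵥ v)
      ≤ opNorm W * vecNorm ((Wᵀ * H⁻¹) *ᵥ v) := by
  have hWt : Wᴴ = Wᵀ := by ext i j; simp [Matrix.conjTranspose_apply]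
  have hWW : W * Wᵀ = X * Matrix.diagonal β * Xᵀ := by
    have hDD : (Matrix.diagonal fun i => Real.sqrt (β i)) *
        (Matrix.diagonal fun i => Real.sqrt (β i)) = Matrix.diagonal β := by
      rw [Matrix.diagonal_mul_diagonal]
      exact congrArg Matrix.diagonal (funext fun i => Real.mul_self_sqrt (hβ i))
    rw [hW, Matrix.transpose_mul, Matrix.diagonal_transpose, Matrix.mul_assoc,
      ← Matrix.mul_assoc (Matrix.diagonal _), hDD, ← Matrix.mul_assoc]
  -- positive definiteness facts
  have hWWpsd : (W * Wᵀ).PosSemidef := by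
    rw [← hWt]; exact Matrix.posSemidef_self_mul_conjTranspose W
  have hS : (H + W * Wᵀ).PosDef := hH.add_posSemidef hWWpsd
  have hSdet : IsUnit (H + W * Wᵀ).det := hS.det_pos.ne'.isUnit
  have hHdet : IsUnit H.det := hH.det_pos.ne'.isUnit
  have hΔ : (Wᵀ * H⁻¹ * W).PosSemidef := by
    have := (hH.inv.posSemidef).conjTranspose_mul_mul_same W
    rwa [hWt] at this
  set S : Matrix (Fin k) (Fin k) ℝ := 1 + Wᵀ * H⁻¹ * W with hSdef
  have hSpos : S.PosDef := Matrix.PosDef.add_posSemidef Matrix.PosDef.one hΔ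
  have hSdet' : IsUnit S.det := hSpos.det_pos.ne'.isUnit
  -- Woodbury identity
  have hkey : Wᵀ * (H + W * Wᵀ)⁻¹ = S⁻¹ * (Wᵀ * H⁻¹) := by
    have h1 : S * Wᵀ = Wᵀ * H⁻¹ * (H + W * Wᵀ) := by
      rw [Matrix.mul_add, Matrix.add_mul, Matrix.one_mul]
      congr 1
      · rw [Matrix.mul_assoc Wᵀ H⁻¹ H, Matrix.nonsing_inv_mul H hHdet, Matrix.mul_one]
      · rw [Matrix.mul_assoc (Wᵀ * H⁻¹) W Wᵀ, Matrix.mul_assoc Wᵀ H⁻¹ (W * Wᵀ),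
          ← Matrix.mul_assoc H⁻¹ W Wᵀ, ← Matrix.mul_assoc Wᵀ (H⁻¹ * W) Wᵀ,
          ← Matrix.mul_assoc Wᵀ H⁻¹ W]
    have h2 : S * (Wᵀ * (H + W * Wᵀ)⁻¹) = Wᵀ * H⁻¹ := by
      rw [← Matrix.mul_assoc, h1, Matrix.mul_nonsing_inv_cancel_right _ _ hSdet]
    calc Wᵀ * (H + W * Wᵀ)⁻¹
        = S⁻¹ * (S * (Wᵀ * (H + W * Wᵀ)⁻¹)) :=
          (Matrix.nonsing_inv_mul_cancel_left S _ hSdet').symm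
      _ = S⁻¹ * (Wᵀ * H⁻¹) := by rw [h2]
  -- assemble
  have hvec : (X * Matrix.diagonal β * Xᵀ * (H + W * Wᵀ)⁻¹) *ᵥ v
      = W *ᵥ (S⁻¹ *ᵥ ((Wᵀ * H⁻¹) *ᵥ v)) := by
    rw [← hWW, Matrix.mul_assoc W Wᵀ ((H + W * Wᵀ)⁻¹), hkey,
      Matrix.mulVec_mulVec, Matrix.mulVec_mulVec, Matrix.mul_assoc]
  rw [hvec]
  calc vecNorm (W *ᵥ (S⁻¹ *ᵥ ((Wᵀ * H⁻¹) *ᵥ v)))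
      ≤ opNorm W * vecNorm (S⁻¹ *ᵥ ((Wᵀ * H⁻¹) *ᵥ v)) := vecNorm_mulVec_le _ _
    _ ≤ opNorm W * vecNorm ((Wᵀ * H⁻¹) *ᵥ v) := by
        exact mul_le_mul_of_nonneg_left
          (vecNorm_one_add_inv_le _ hΔ _) (norm_nonneg _)
end
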